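/- arXiv:1909.04222 — 4 statements merged into one kernel-verified Lean document; each statement's English description precedes it below -/
import Mathlib

section
/- Let X follow an elliptical distribution on ℝ^M with density p(x) = g((x-μ)^T Σ^{-1} (x-μ)), where Σ is positive definite and g is differentiable, non-negative, and p integrates to 1. If p is MTP₂, i.e., p(x)p(y) ≤ p(x ∧ y)p(x ∨ y) for all x, y (with ∧, ∨ coordinatewise min and max), then Σ^{-1} is an M-matrix, i.e., (Σ^{-1})_{ij} ≤ 0 for all i ≠ j. -/
/-!
Write `K = Σ⁻¹` and suppose `K i j > 0` for some `i ≠ j`. Apply MTP₂ to `μ + v` and `μ - v` with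
`v = s eᵢ - t eⱼ`, `s, t ≥ 0`: their meet and join are `μ ∓ |v|`, so `g (vᵀKv) ≤ g (|v|ᵀK|v|)`,
that is `g (a - 2st Kᵢⱼ) ≤ g (a + 2st Kᵢⱼ)` with `a = s² Kᵢᵢ + t² Kⱼⱼ`. As `a ≥ 2st √(Kᵢᵢ Kⱼⱼ)`,
these pairs include all `v ≤ w` with `w / v` close enough to `1`, and chaining them shows that `g`
is nondecreasing on `(0, ∞)`. If `g` is positive somewhere on `(0, ∞)`, then `p` is bounded below by
a positive constant outside a bounded set, so `p` is not integrable; otherwise `p = 0` off `{μ}`.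
Either way `∫ p ≠ 1`.
-/

open MeasureTheory Matrix

section LatticeGroup

variable {α : Type*} [Lattice α] [AddCommGroup α] [AddLeftMono α]

theorem add_inf_sub_eq_sub_abs (μ v : α) : (μ + v) ⊓ (μ - v) = μ - |v| := by
  rw [sub_eq_add_neg, sub_eq_add_neg, ← add_inf, abs, neg_sup, neg_neg, inf_comm]

theorem add_sup_sub_eq_add_abs (μ v : α) : (μ + v) ⊔ (μ - v) = μ + |v| := by
  rw [sub_eq_add_neg, ← add_sup, abs]

end LatticeGroup

theorem abs_single_add_single {n β : Type*} [DecidableEq n] [Lattice β] [AddGroup β]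
    [AddLeftMono β] {i j : n} (hij : i ≠ j) (a b : β) :
    |Pi.single i a + Pi.single j b| = (Pi.single i |a| + Pi.single j |b| : n → β) := by
  funext k
  rcases eq_or_ne k i with rfl | hki
  · simp [hij]
  rcases eq_or_ne k j with rfl | hkj
  · simp [hki]
  · simp [hki, hkj]

section QuadraticForm

variable {n : Type*} [Fintype n]

theorem neg_dotProduct_mulVec_neg (K : Matrix n n ℝ) (z : n → ℝ) :
    -z ⬝ᵥ K *ᵥ -z = z ⬝ᵥ K *ᵥ z := by
  simp [mulVec_neg]

theorem single_add_single_dotProduct_mulVec [DecidableEq n] {K : Matrix n n ℝ} {i j : n}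
    (hK : K j i = K i j) (s t : ℝ) :
    (Pi.single i s + Pi.single j t) ⬝ᵥ K *ᵥ (Pi.single i s + Pi.single j t) =
      s ^ 2 * K i i + t ^ 2 * K j j + 2 * s * t * K i j := by
  simp only [mulVec_add, mulVec_single, add_dotProduct, dotProduct_add, single_dotProduct,
    Pi.smul_apply, op_smul_eq_mul, col_apply]
  linear_combination s * t * hK

theorem Matrix.PosDef.exists_pos_mul_norm_sq_le {K : Matrix n n ℝ} (hK : K.PosDef) :
    ∃ c > 0, ∀ z : n → ℝ, c * ‖z‖ ^ 2 ≤ z ⬝ᵥ K *ᵥ z := by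
  have hcont : Continuous fun z : n → ℝ => z ⬝ᵥ K *ᵥ z := by fun_prop
  obtain ⟨c, hc, hmin⟩ := (isCompact_sphere (0 : n → ℝ) 1).exists_forall_le' hcont.continuousOn
    (a := 0) fun z hz => by
      simpa using hK.dotProduct_mulVec_pos
        (ne_zero_of_mem_unit_sphere (⟨z, hz⟩ : Metric.sphere (0 : n → ℝ) 1))
  refine ⟨c, hc, fun z => ?_⟩
  rcases eq_or_ne z 0 with rfl | hz
  · simp
  have hz' : 0 < ‖z‖ := norm_pos_iff.2 hz
  have hunit : ‖z‖⁻¹ • z ∈ Metric.sphere (0 : n → ℝ) 1 := by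
    simp [norm_smul, hz'.ne']
  calc c * ‖z‖ ^ 2 ≤ (‖z‖⁻¹ • z) ⬝ᵥ K *ᵥ (‖z‖⁻¹ • z) * ‖z‖ ^ 2 := by
        gcongr; exact hmin _ hunit
    _ = z ⬝ᵥ K *ᵥ z := by
        simp only [mulVec_smul, smul_dotProduct, dotProduct_smul, smul_eq_mul]
        field_simp

variable [Nonempty n]

theorem Matrix.PosDef.volume_le_dotProduct_mulVec_eq_top {K : Matrix n n ℝ} (hK : K.PosDef)
    (μ : n → ℝ) (t : ℝ) : volume {x | t ≤ (x - μ) ⬝ᵥ K *ᵥ (x - μ)} = ⊤ := by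
  obtain ⟨c, hc, hcK⟩ := hK.exists_pos_mul_norm_sq_le
  have hbdd : {x | t ≤ (x - μ) ⬝ᵥ K *ᵥ (x - μ)}ᶜ ⊆ Metric.closedBall μ √(t / c) := by
    intro x hx
    simp only [Set.mem_compl_iff, Set.mem_ofPred_eq, not_le] at hx
    rw [Metric.mem_closedBall, dist_eq_norm, ← abs_norm]
    refine Real.abs_le_sqrt ?_
    rw [le_div_iff₀ hc]
    linarith [hcK (x - μ)]
  have hcover := measure_univ_le_add_compl (μ := volume) {x | t ≤ (x - μ) ⬝ᵥ K *ᵥ (x - μ)}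
  rw [measure_univ_of_isAddLeftInvariant, top_le_iff, ENNReal.add_eq_top] at hcover
  exact hcover.resolve_right (measure_mono hbdd |>.trans_lt measure_closedBall_lt_top).ne

theorem integral_comp_dotProduct_mulVec_eq_zero {K : Matrix n n ℝ} (hK : K.PosDef) (μ : n → ℝ)
    {g : ℝ → ℝ} (hg : MonotoneOn g (Set.Ioi 0)) (hg0 : ∀ t, 0 ≤ g t) :
    ∫ x, g ((x - μ) ⬝ᵥ K *ᵥ (x - μ)) = 0 := by
  -- The non-integrable case is Lean's junk value `0`; in the integrable case `g = 0` on `(0, ∞)`.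
  by_cases hint : Integrable fun x => g ((x - μ) ⬝ᵥ K *ᵥ (x - μ))
  swap
  · exact integral_undef hint
  have hzero : ∀ t > 0, g t = 0 := by
    intro t ht
    by_contra hgt
    have hsub : {x | t ≤ (x - μ) ⬝ᵥ K *ᵥ (x - μ)} ⊆ {x | g t ≤ g ((x - μ) ⬝ᵥ K *ᵥ (x - μ))} :=
      fun x hx => hg ht (ht.trans_le hx) hx
    have := (measure_mono hsub).trans_lt
      (hint.measure_ge_lt_top ((hg0 t).lt_of_ne (Ne.symm hgt)))
    exact this.ne (hK.volume_le_dotProduct_mulVec_eq_top μ t)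
  refine integral_eq_zero_of_ae ?_
  filter_upwards [compl_mem_ae_iff.2 (measure_singleton μ)] with x hx
  have hxμ : x - μ ≠ 0 := sub_ne_zero.2 hx
  exact hzero _ (by simpa using hK.dotProduct_mulVec_pos hxμ)

end QuadraticForm

def IsMTP2 {n : Type*} (p : (n → ℝ) → ℝ) : Prop :=
  ∀ x y, p x * p y ≤ p (x ⊓ y) * p (x ⊔ y)

namespace IsMTP2

variable {n : Type*} [Fintype n] {K : Matrix n n ℝ} {μ : n → ℝ} {g : ℝ → ℝ}
  {p : (n → ℝ) → ℝ}

theorem comp_dotProduct_mulVec_le_abs (hmtp2 : IsMTP2 p) (hg : ∀ t, 0 ≤ g t)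
    (hp : ∀ x, p x = g ((x - μ) ⬝ᵥ K *ᵥ (x - μ))) (v : n → ℝ) :
    g (v ⬝ᵥ K *ᵥ v) ≤ g (|v| ⬝ᵥ K *ᵥ |v|) := by
  have h := hmtp2 (μ + v) (μ - v)
  rw [add_inf_sub_eq_sub_abs, add_sup_sub_eq_add_abs, hp, hp, hp, hp] at h
  simp only [add_sub_cancel_left, sub_sub_cancel_left, neg_dotProduct_mulVec_neg] at h
  exact (mul_self_le_mul_self_iff (hg _) (hg _)).2 h

theorem comp_sub_le_comp_add [DecidableEq n] (hmtp2 : IsMTP2 p) (hg : ∀ t, 0 ≤ g t)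
    (hp : ∀ x, p x = g ((x - μ) ⬝ᵥ K *ᵥ (x - μ))) {i j : n} (hij : i ≠ j) (hK : K j i = K i j)
    {s t : ℝ} (hs : 0 ≤ s) (ht : 0 ≤ t) :
    g (s ^ 2 * K i i + t ^ 2 * K j j - 2 * s * t * K i j) ≤
      g (s ^ 2 * K i i + t ^ 2 * K j j + 2 * s * t * K i j) := by
  have h := hmtp2.comp_dotProduct_mulVec_le_abs hg hp (Pi.single i s + Pi.single j (-t))
  rw [abs_single_add_single hij, abs_of_nonneg hs, abs_neg, abs_of_nonneg ht,
    single_add_single_dotProduct_mulVec hK, single_add_single_dotProduct_mulVec hK] at h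
  convert h using 2
  ring

end IsMTP2

theorem monotoneOn_Ioi_of_le_of_le_mul {f : ℝ → ℝ} {β : ℝ} (hβ : 1 < β)
    (h : ∀ v w, 0 < v → v ≤ w → w ≤ β * v → f v ≤ f w) : MonotoneOn f (Set.Ioi 0) := by
  intro v (hv : 0 < v) w _ hvw
  have hpow : ∀ k : ℕ, ∀ w, v ≤ w → w ≤ β ^ k * v → f v ≤ f w := by
    intro k
    induction k with
    | zero => intro w h₁ h₂; rw [le_antisymm (by simpa using h₂) h₁]
    | succ k ih =>
      intro w h₁ h₂
      rcases le_or_gt w (β ^ k * v) with hw | hw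
      · exact ih w h₁ hw
      have hvk : v ≤ β ^ k * v := le_mul_of_one_le_left hv.le (one_le_pow₀ hβ.le)
      refine (ih _ hvk le_rfl).trans (h _ w (hv.trans_le hvk) hw.le ?_)
      rwa [← mul_assoc, ← pow_succ']
  obtain ⟨k, hk⟩ := pow_unbounded_of_one_lt (w / v) hβ
  exact hpow k w hvw ((div_lt_iff₀ hv).1 hk).le

theorem exists_nonneg_sq_add_sq_eq_of_two_mul_le {u m : ℝ} (hm : 0 ≤ m) (hmu : 2 * m ≤ u) :
    ∃ a b : ℝ, 0 ≤ a ∧ 0 ≤ b ∧ a ^ 2 + b ^ 2 = u ∧ a * b = m := by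
  have hP := Real.sq_sqrt (show 0 ≤ u + 2 * m by linarith)
  have hQ := Real.sq_sqrt (show 0 ≤ u - 2 * m by linarith)
  have hQP : √(u - 2 * m) ≤ √(u + 2 * m) := Real.sqrt_le_sqrt (by linarith)
  refine ⟨(√(u + 2 * m) + √(u - 2 * m)) / 2, (√(u + 2 * m) - √(u - 2 * m)) / 2,
    by positivity, by linarith, ?_, ?_⟩
  · linear_combination (hP + hQ) / 2
  · linear_combination (hP - hQ) / 4

theorem monotoneOn_Ioi_of_le_sub_le_add {g : ℝ → ℝ} {A B C : ℝ} (hA : 0 < A) (hB : 0 < B)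
    (hC : 0 < C) (h : ∀ s t : ℝ, 0 ≤ s → 0 ≤ t →
      g (s ^ 2 * A + t ^ 2 * B - 2 * s * t * C) ≤ g (s ^ 2 * A + t ^ 2 * B + 2 * s * t * C)) :
    MonotoneOn g (Set.Ioi 0) := by
  -- `s²A + t²B ≥ 2st√(AB)`, so every `v ≤ w` with `√(AB) (w - v) ≤ C (v + w)` is of the form
  -- `(s²A + t²B - 2stC, s²A + t²B + 2stC)`.
  have hR : 0 < √(A * B) := Real.sqrt_pos.2 (mul_pos hA hB)
  refine monotoneOn_Ioi_of_le_of_le_mul (β := 1 + C / √(A * B)) (by simp [hC, hR])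
    fun v w hv hvw hwv => ?_
  have hwv' : √(A * B) * (w - v) ≤ C * v := by
    have : w - v ≤ C * v / √(A * B) := by
      linarith [show (1 + C / √(A * B)) * v = v + C * v / √(A * B) by ring]
    rwa [le_div_iff₀ hR, mul_comm] at this
  have hcond : 2 * (√(A * B) * (w - v) / (4 * C)) ≤ (v + w) / 2 := by
    have : √(A * B) * (w - v) / (4 * C) ≤ v / 4 := by
      rw [div_le_iff₀ (by positivity)]; linarith
    linarith
  obtain ⟨a, b, ha, hb, hab, hab'⟩ := exists_nonneg_sq_add_sq_eq_of_two_mul_le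
    (by have := sub_nonneg.2 hvw; positivity) hcond
  have hsA := Real.sq_sqrt hA.le
  have hsB := Real.sq_sqrt hB.le
  have hstep := h (a / √A) (b / √B) (by positivity) (by positivity)
  have hsq : (a / √A) ^ 2 * A + (b / √B) ^ 2 * B = (v + w) / 2 := by
    rw [div_pow, div_pow, hsA, hsB]; field_simp; linarith
  have hcross : 2 * (a / √A) * (b / √B) * C = (w - v) / 2 := by
    rw [mul_assoc 2, div_mul_div_comm, ← Real.sqrt_mul hA.le, hab']
    field_simp
    ring
  rw [hsq, hcross] at hstep
  convert hstep using 2 <;> ring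

theorem stmt_1_general (M : ℕ) (Sig : Matrix (Fin M) (Fin M) ℝ) (hSig : Sig.PosDef)
    (μ : Fin M → ℝ) (g : ℝ → ℝ)
    (hgnonneg : ∀ t, 0 ≤ g t)
    (p : (Fin M → ℝ) → ℝ)
    (hp : ∀ x, p x = g ((x - μ) ⬝ᵥ (Sig⁻¹ *ᵥ (x - μ))))
    (hint : ∫ x, p x = 1)
    (hmtp2 : ∀ x y : Fin M → ℝ, p x * p y ≤ p (x ⊓ y) * p (x ⊔ y)) :
    ∀ i j, i ≠ j → Sig⁻¹ i j ≤ 0 := by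
  intro i j hij
  by_contra! hpos
  have hK : (Sig⁻¹).PosDef := hSig.inv
  have hsymm : Sig⁻¹ j i = Sig⁻¹ i j := by simpa using hK.isHermitian.apply i j
  have hmono : MonotoneOn g (Set.Ioi 0) :=
    monotoneOn_Ioi_of_le_sub_le_add hK.diag_pos hK.diag_pos hpos
      fun s t hs ht => IsMTP2.comp_sub_le_comp_add hmtp2 hgnonneg hp hij hsymm hs ht
  have : Nonempty (Fin M) := ⟨i⟩
  rw [show p = _ from funext hp, integral_comp_dotProduct_mulVec_eq_zero hK μ hmono hgnonneg]
    at hint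
  exact zero_ne_one hint

theorem stmt_1 (M : ℕ) (Sig : Matrix (Fin M) (Fin M) ℝ) (hSig : Sig.PosDef)
    (μ : Fin M → ℝ) (g : ℝ → ℝ) (hg : Differentiable ℝ g)
    (hgnonneg : ∀ t, 0 ≤ g t)
    (p : (Fin M → ℝ) → ℝ)
    (hp : ∀ x, p x = g ((x - μ) ⬝ᵥ (Sig⁻¹ *ᵥ (x - μ))))
    (hint : ∫ x, p x = 1)
    (hmtp2 : ∀ x y : Fin M → ℝ, p x * p y ≤ p (x ⊓ y) * p (x ⊔ y)) :
    ∀ i j, i ≠ j → Sig⁻¹ i j ≤ 0 :=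
  stmt_1_general M Sig hSig μ g hgnonneg p hp hint hmtp2
end

section
/- Fix a two-dimensional centered t-distribution with one degree of freedom whose density is proportional to (1 + x^T K x)^{-3/2} with K = [[1, -0.1], [-0.1, 1]]. Then this density is not MTP₂: specifically, for x = (-1, 1) and y = (0, 0), p(x) p(y) > p(x ∧ y) p(x ∨ y). -/
/-!
At the four points the quadratic form `1 + zᵀ K z` takes the values `2` at `x ∧ y = (-1, 0)` and
`x ∨ y = (0, 1)`, `3.2` at `x = (-1, 1)` and `1` at `y = 0`. Since `t ↦ t ^ (-3/2)` is strictly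
decreasing, `2 · 2 > 3.2 · 1` gives `p(x ∧ y) p(x ∨ y) < p(x) p(y)`.
-/

open Matrix

lemma vec2_dotProduct_mulVec_of {α : Type*} [CommRing α] (a b c d z₀ z₁ : α) :
    ![z₀, z₁] ⬝ᵥ (!![a, b; c, d] *ᵥ ![z₀, z₁]) = a * z₀ * z₀ + (b + c) * z₀ * z₁ + d * z₁ * z₁ := by
  simp only [vec2_dotProduct, mulVec_fin_two, of_apply, cons_val_zero, cons_val_one]
  ring

lemma mul_rpow_neg_lt_mul_rpow_neg {c s a b u v : ℝ} (hc : c ≠ 0) (hs : 0 < s)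
    (ha : 0 < a) (hb : 0 < b) (hu : 0 < u) (hv : 0 < v) (h : u * v < a * b) :
    c * a ^ (-s) * (c * b ^ (-s)) < c * u ^ (-s) * (c * v ^ (-s)) := by
  have hmono : (a * b) ^ (-s) < (u * v) ^ (-s) :=
    Real.rpow_lt_rpow_of_neg (mul_pos hu hv) h (neg_neg_of_pos hs)
  calc c * a ^ (-s) * (c * b ^ (-s)) = c * c * (a * b) ^ (-s) := by
        rw [Real.mul_rpow ha.le hb.le]; ring
    _ < c * c * (u * v) ^ (-s) := mul_lt_mul_of_pos_left hmono (mul_self_pos.mpr hc)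
    _ = c * u ^ (-s) * (c * v ^ (-s)) := by
        rw [Real.mul_rpow hu.le hv.le]; ring

theorem stmt_2 (c : ℝ) (hc : 0 < c)
    (K : Matrix (Fin 2) (Fin 2) ℝ) (hK : K = !![1, -0.1; -0.1, 1])
    (p : (Fin 2 → ℝ) → ℝ)
    (hp : ∀ z, p z = c * (1 + z ⬝ᵥ (K *ᵥ z)) ^ (-(3:ℝ)/2))
    (x y : Fin 2 → ℝ) (hx : x = ![-1, 1]) (hy : y = ![0, 0]) :
    p (x ⊓ y) * p (x ⊔ y) < p x * p y := by
  subst hK hx hy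
  have hinf : ![(-1 : ℝ), 1] ⊓ ![0, 0] = ![-1, 0] := by ext i; fin_cases i <;> simp
  have hsup : ![(-1 : ℝ), 1] ⊔ ![0, 0] = ![0, 1] := by ext i; fin_cases i <;> simp
  simp only [hinf, hsup, hp, vec2_dotProduct_mulVec_of, neg_div]
  exact mul_rpow_neg_lt_mul_rpow_neg hc.ne' (by norm_num) (by norm_num) (by norm_num)
    (by norm_num) (by norm_num) (by norm_num)
end

section
/- Let K be a symmetric positive definite N×N matrix with K_{ij} ≤ 0 for all i ≠ j, and p(x) ∝ exp(-½ x^T K x). Then for all x, y ∈ ℝ^N, x^T K x + y^T K y ≥ (x∧y)^T K (x∧y) + (x∨y)^T K (x∨y); equivalently, the Gaussian density p is MTP₂. -/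
open Matrix

private lemma key_pt (a b e d : ℝ) :
    a * e + b * d ≤ min a b * min e d + max a b * max e d := by
  rcases le_total a b with h1 | h1 <;> rcases le_total e d with h2 | h2 <;>
    simp only [min_eq_left, min_eq_right, max_eq_left, max_eq_right, h1, h2] <;> nlinarith

private lemma quad_eq (N : ℕ) (K : Matrix (Fin N) (Fin N) ℝ) (u : Fin N → ℝ) :
    u ⬝ᵥ (K *ᵥ u) = ∑ i, ∑ j, K i j * (u i * u j) := by
  simp only [dotProduct, mulVec, Finset.mul_sum]
  apply Finset.sum_congr rfl; intro i _
  apply Finset.sum_congr rfl; intro j _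
  ring

theorem stmt_8 (N : ℕ) (K : Matrix (Fin N) (Fin N) ℝ) (hK : K.PosDef)
    (hoff : ∀ i j, i ≠ j → K i j ≤ 0)
    (c : ℝ) (hc : 0 < c)
    (p : (Fin N → ℝ) → ℝ)
    (hp : ∀ x, p x = c * Real.exp (-(1/2) * (x ⬝ᵥ (K *ᵥ x)))) :
    (∀ x y : Fin N → ℝ,
      (x ⊓ y) ⬝ᵥ (K *ᵥ (x ⊓ y)) + (x ⊔ y) ⬝ᵥ (K *ᵥ (x ⊔ y))
        ≤ x ⬝ᵥ (K *ᵥ x) + y ⬝ᵥ (K *ᵥ y)) ∧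
    (∀ x y : Fin N → ℝ, p x * p y ≤ p (x ⊓ y) * p (x ⊔ y)) := by
  have main : ∀ x y : Fin N → ℝ,
      (x ⊓ y) ⬝ᵥ (K *ᵥ (x ⊓ y)) + (x ⊔ y) ⬝ᵥ (K *ᵥ (x ⊔ y))
        ≤ x ⬝ᵥ (K *ᵥ x) + y ⬝ᵥ (K *ᵥ y) := by
    intro x y
    simp only [quad_eq]
    rw [← Finset.sum_add_distrib, ← Finset.sum_add_distrib]
    apply Finset.sum_le_sum; intro i _
    rw [← Finset.sum_add_distrib, ← Finset.sum_add_distrib]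
    apply Finset.sum_le_sum; intro j _
    rw [← mul_add, ← mul_add]
    simp only [Pi.inf_apply, Pi.sup_apply]
    by_cases hij : i = j
    · subst hij
      have : min (x i) (y i) * min (x i) (y i) + max (x i) (y i) * max (x i) (y i)
          = x i * x i + y i * y i := by
        rcases le_total (x i) (y i) with h | h <;>
          simp only [min_eq_left, min_eq_right, max_eq_left, max_eq_right, h] <;> ring
      rw [this]
    · exact mul_le_mul_of_nonpos_left (key_pt _ _ _ _) (hoff i j hij)
  refine ⟨main, ?_⟩
  intro x y
  rw [hp, hp, hp, hp]
  have := main x y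
  calc c * Real.exp (-(1/2) * (x ⬝ᵥ (K *ᵥ x))) * (c * Real.exp (-(1/2) * (y ⬝ᵥ (K *ᵥ y))))
      = c * c * Real.exp (-(1/2) * (x ⬝ᵥ (K *ᵥ x)) + -(1/2) * (y ⬝ᵥ (K *ᵥ y))) := by
        rw [Real.exp_add]; ring
    _ ≤ c * c * Real.exp (-(1/2) * ((x ⊓ y) ⬝ᵥ (K *ᵥ (x ⊓ y))) + -(1/2) * ((x ⊔ y) ⬝ᵥ (K *ᵥ (x ⊔ y)))) := by
        apply mul_le_mul_of_nonneg_left _ (by positivity)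
        apply Real.exp_le_exp.2
        nlinarith
    _ = c * Real.exp (-(1/2) * ((x ⊓ y) ⬝ᵥ (K *ᵥ (x ⊓ y)))) * (c * Real.exp (-(1/2) * ((x ⊔ y) ⬝ᵥ (K *ᵥ (x ⊔ y))))) := by
        rw [Real.exp_add]; ring
end

section
/- Let Σ = σ² β β^T + D, where β ∈ ℝ^N, σ² > 0, and D is a diagonal matrix with strictly positive diagonal entries d₁, …, d_N. Then Σ is positive definite and its inverse is given by the Sherman–Morrison formula K = D^{-1} - (σ² / (1 + σ² β^T D^{-1} β)) D^{-1}β β^T D^{-1}; consequently, if all βᵢ ≥ 0, then K_{ij} ≤ 0 for all i ≠ j, i.e., the single-factor Gaussian model with non-negative loadings is MTP₂. -/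
open Matrix

lemma vmv_mul_vmv {N : ℕ} (a b x y : Fin N → ℝ) :
    vecMulVec a b * vecMulVec x y = (b ⬝ᵥ x) • vecMulVec a y := by
  ext i j
  simp only [mul_apply, vecMulVec_apply, Matrix.smul_apply, dotProduct, smul_eq_mul,
    Finset.sum_mul, Finset.mul_sum]
  apply Finset.sum_congr rfl
  intro k _; ring

lemma diag_mul_vmv {N : ℕ} (e a b : Fin N → ℝ) :
    Matrix.diagonal e * vecMulVec a b = vecMulVec (fun i => e i * a i) b := by
  ext i j; simp [diagonal_mul, vecMulVec_apply, mul_assoc]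

lemma vmv_mul_diag {N : ℕ} (e a b : Fin N → ℝ) :
    vecMulVec a b * Matrix.diagonal e = vecMulVec a (fun j => b j * e j) := by
  ext i j; simp [mul_diagonal, vecMulVec_apply, mul_assoc]

theorem stmt_16 (N : ℕ) (β : Fin N → ℝ) (σ2 : ℝ) (hσ2 : 0 < σ2)
    (d : Fin N → ℝ) (hd : ∀ i, 0 < d i)
    (Sig : Matrix (Fin N) (Fin N) ℝ)
    (hSig : Sig = σ2 • vecMulVec β β + Matrix.diagonal d) :
    Sig.PosDef ∧
    Sig⁻¹ = Matrix.diagonal (fun i => (d i)⁻¹) -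
      (σ2 / (1 + σ2 * (β ⬝ᵥ (Matrix.diagonal (fun i => (d i)⁻¹) *ᵥ β)))) •
        vecMulVec (Matrix.diagonal (fun i => (d i)⁻¹) *ᵥ β)
          (Matrix.diagonal (fun i => (d i)⁻¹) *ᵥ β) ∧
    ((∀ i, 0 ≤ β i) → ∀ i j, i ≠ j → Sig⁻¹ i j ≤ 0) := by
  have hd0 : ∀ i, d i ≠ 0 := fun i => (hd i).ne'
  set e : Fin N → ℝ := fun i => (d i)⁻¹ with he
  set u : Fin N → ℝ := Matrix.diagonal e *ᵥ β with hu
  have hui : ∀ i, u i = (d i)⁻¹ * β i := fun i => by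
    simp [hu, mulVec_diagonal, he]
  set t : ℝ := β ⬝ᵥ u with ht
  have ht0 : 0 ≤ t := by
    apply Finset.sum_nonneg
    intro i _
    rw [hui i]
    have h1 : (0:ℝ) ≤ (d i)⁻¹ := inv_nonneg.mpr (hd i).le
    nlinarith [sq_nonneg (β i)]
  set c : ℝ := 1 + σ2 * t with hc
  have hc0 : 0 < c := by nlinarith
  set K : Matrix (Fin N) (Fin N) ℝ :=
    Matrix.diagonal e - (σ2 / c) • vecMulVec u u with hK
  -- K * Sig = 1
  have hinv : K * Sig = 1 := by
    rw [hK, hSig]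
    rw [Matrix.sub_mul, Matrix.mul_add, Matrix.mul_add, Matrix.mul_smul,
      Matrix.smul_mul, Matrix.smul_mul, Matrix.mul_smul]
    have h1 : Matrix.diagonal e * vecMulVec β β = vecMulVec u β := by
      rw [diag_mul_vmv, show (fun i => e i * β i) = u from funext fun i => (hui i).symm]
    have h2 : Matrix.diagonal e * Matrix.diagonal d = 1 := by
      rw [diagonal_mul_diagonal,
        show (fun i => e i * d i) = fun _ => (1:ℝ) from funext fun i => inv_mul_cancel₀ (hd0 i)]
      exact Matrix.diagonal_one
    have h3 : vecMulVec u u * vecMulVec β β = (u ⬝ᵥ β) • vecMulVec u β :=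
      vmv_mul_vmv u u β β
    have h4 : vecMulVec u u * Matrix.diagonal d = vecMulVec u β := by
      rw [vmv_mul_diag,
        show (fun j => u j * d j) = β from funext fun j => by
          rw [hui j, mul_comm, ← mul_assoc, mul_inv_cancel₀ (hd0 j), one_mul]]
    have hub : u ⬝ᵥ β = t := by rw [ht, dotProduct_comm]
    rw [h1, h2, h3, h4, hub, smul_smul, smul_smul]
    have hco : σ2 - (σ2 / c * t * σ2 + σ2 / c) = 0 := by
      field_simp; ring
    ext i j
    simp only [Matrix.add_apply, Matrix.sub_apply, Matrix.smul_apply, smul_eq_mul, vecMulVec_apply]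
    linear_combination (u i * β j) * hco
  have hKeq : Sig⁻¹ = K := Matrix.inv_eq_left_inv hinv
  refine ⟨?_, hKeq, ?_⟩
  · -- PosDef
    rw [hSig, add_comm]
    refine Matrix.PosDef.add_posSemidef (Matrix.posDef_diagonal_iff.mpr hd) ?_
    refine Matrix.PosSemidef.of_dotProduct_mulVec_nonneg ?_ (fun x => ?_)
    · ext i j
      simp [conjTranspose_apply, vecMulVec_apply, mul_comm]
    · have hx : (σ2 • vecMulVec β β) *ᵥ x = σ2 • (β ⬝ᵥ x) • β := by
        ext i
        simp only [mulVec, dotProduct, vecMulVec_apply, Matrix.smul_apply, smul_eq_mul, Pi.smul_apply]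
        rw [Finset.sum_mul, Finset.mul_sum]
        exact Finset.sum_congr rfl fun k _ => by ring
      rw [hx]
      simp only [star_trivial, dotProduct_smul, smul_eq_mul]
      have : x ⬝ᵥ β = β ⬝ᵥ x := dotProduct_comm x β
      rw [this]
      nlinarith [sq_nonneg (β ⬝ᵥ x)]
  · intro hb i j hij
    rw [hKeq, hK]
    simp only [Matrix.sub_apply, Matrix.smul_apply, vecMulVec_apply, smul_eq_mul,
      diagonal_apply_ne _ hij]
    have h1 : 0 ≤ σ2 / c := by positivity
    have h2 : 0 ≤ u i := by
      rw [hui i]; exact mul_nonneg (inv_nonneg.mpr (hd i).le) (hb i)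
    have h3 : 0 ≤ u j := by
      rw [hui j]; exact mul_nonneg (inv_nonneg.mpr (hd j).le) (hb j)
    nlinarith [mul_nonneg (mul_nonneg h1 h2) h3]
end
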